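/- arXiv:2311.15611 — 2 statements merged into one kernel-verified Lean document; each statement's English description precedes it below -/
import Mathlib

section
/- Let f = a_0 + a_1 z + ... + a_m z^m ∈ ℤ[z] be primitive with a_m = ± p^k d for a prime p and positive integers k, d with p not dividing d, and suppose every complex zero of f satisfies |z| > d. Suppose there is an index j with 1 ≤ j ≤ m such that p does not divide a_{m-j}, and that |a_0/q| ≤ |a_m| where q is the smallest prime divisor of a_0. Then f is a product of at most min{k, j} irreducible factors in ℤ[z]. -/
/-!
Every nonconstant divisor `g` of `f` has all its roots outside the disc of radius `d ≥ 1`, so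
`|g(0)| = |lc g| · ∏ |roots| > |lc g| · d`. Suppose `f = g h` with both factors nonconstant and
`p ∤ lc g`. Then `p ^ k ∣ lc h`, so `|h(0)| > p ^ k d = |a_m| ≥ |a_0 / q|`, while `|g(0)| > 1` divides
`a_0` and hence `|g(0)| ≥ q`; multiplying, `|a_0| > |a_0|`. So in a factorization into at least two
irreducibles (all nonconstant, as `f` is primitive) `p` divides every leading coefficient. Since
`p ^ (k + 1) ∤ a_m` there are at most `k` factors, and since reducing modulo `p` lowers the degree
of every factor while `a_{m-j}` survives, there are at most `j` of them.
-/

open Polynomial Finset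

lemma exists_fin_irreducible_prod_eq {α : Type*} [CommMonoidWithZero α] [WfDvdMonoid α]
    {a : α} (ha : a ≠ 0) (hu : ¬IsUnit a) :
    ∃ (n : ℕ) (g : Fin n → α), (∀ i, Irreducible (g i)) ∧ a = ∏ i, g i := by
  obtain ⟨s, hirr, rfl, -⟩ := (WfDvdMonoid.not_isUnit_iff_exists_factors_eq a ha).mp hu
  exact ⟨s.toList.length, fun i => s.toList[(i : ℕ)],
    fun i => hirr _ (Multiset.mem_toList.mp (List.getElem_mem _)),
    ((Fin.prod_univ_getElem _).trans (Multiset.prod_toList s)).symm⟩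

lemma Int.le_abs_of_dvd_of_forall_prime_dvd_le {a c : ℤ} {q : ℕ}
    (hq : ∀ q' : ℕ, q'.Prime → (q' : ℤ) ∣ a → q ≤ q') (hca : c ∣ a) (hc : 1 < |c|) :
    (q : ℤ) ≤ |c| := by
  have hc1 : c.natAbs ≠ 1 := fun h1 => by rw [Int.abs_eq_natAbs, h1] at hc; norm_num at hc
  have hmin : (c.natAbs.minFac : ℤ) ∣ a := (Int.natCast_dvd.mpr (Nat.minFac_dvd _)).trans hca
  have := (hq _ (Nat.minFac_prime hc1) hmin).trans
    (Nat.minFac_le (Int.natAbs_pos.mpr (by rintro rfl; simp at hc)))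
  rw [Int.abs_eq_natAbs]
  exact_mod_cast this

namespace Polynomial

lemma natDegree_sum_range_C_mul_X_pow {R : Type*} [Semiring R] {a : ℕ → R} {m : ℕ} (ha : a m ≠ 0) :
    (∑ j ∈ range (m + 1), C (a j) * X ^ j).natDegree = m := by
  refine natDegree_eq_of_le_of_coeff_ne_zero
    (natDegree_le_iff_coeff_eq_zero.mpr fun i hi => ?_) ?_
  · simp [hi.not_ge]
  · simpa using ha

lemma natDegree_pos_of_irreducible_of_dvd {R : Type*} [CommRing R] {f g : R[X]}
    (hf : f.IsPrimitive) (hg : Irreducible g) (hgf : g ∣ f) : 0 < g.natDegree := by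
  by_contra! h0
  rw [eq_C_of_natDegree_eq_zero (Nat.le_zero.mp h0)] at hg hgf
  exact hg.not_isUnit (isUnit_C.mpr (hf _ hgf))

section Prod

variable {R ι : Type*} [CommSemiring R] [NoZeroDivisors R]

lemma natDegree_prod_pos {s : Finset ι} {g : ι → R[X]} (h0 : ∀ i ∈ s, g i ≠ 0) {i : ι}
    (hi : i ∈ s) (hgi : 0 < (g i).natDegree) : 0 < (∏ i ∈ s, g i).natDegree := by
  rw [natDegree_prod _ _ h0]
  exact sum_pos' (fun _ _ => Nat.zero_le _) ⟨i, hi, hgi⟩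

lemma card_add_le_natDegree_prod {S : Type*} [CommSemiring S] (φ : R →+* S) (s : Finset ι)
    (g : ι → R[X]) (hg : ∀ i ∈ s, 0 < (g i).natDegree)
    (hφ : ∀ i ∈ s, φ (g i).leadingCoeff = 0) {e : ℕ} (he : φ ((∏ i ∈ s, g i).coeff e) ≠ 0) :
    #s + e ≤ (∏ i ∈ s, g i).natDegree := by
  have hdrop : ∀ i ∈ s, ((g i).map φ).natDegree + 1 ≤ (g i).natDegree :=
    fun i hi => natDegree_map_lt' (hφ i hi) (hg i hi)
  have he' : e ≤ (∏ i ∈ s, (g i).map φ).natDegree :=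
    le_natDegree_of_ne_zero (by rwa [← Polynomial.map_prod, coeff_map])
  rw [natDegree_prod _ _ (fun i hi => ne_zero_of_natDegree_gt (hg i hi))]
  calc #s + e
      ≤ #s + ∑ i ∈ s, ((g i).map φ).natDegree := by
        gcongr; exact he'.trans (natDegree_prod_le _ _)
    _ = ∑ i ∈ s, (((g i).map φ).natDegree + 1) := by
      rw [sum_add_distrib, card_eq_sum_ones, add_comm]
    _ ≤ ∑ i ∈ s, (g i).natDegree := sum_le_sum hdrop

end Prod

lemma card_le_of_prime_dvd_leadingCoeff {R ι : Type*} [CommRing R] [IsDomain R] {p d : R}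
    {k : ℕ} (hp : Prime p) (hpd : ¬p ∣ d) (s : Finset ι) (g : ι → R[X])
    (hpg : ∀ i ∈ s, p ∣ (g i).leadingCoeff) (hdvd : (∏ i ∈ s, g i).leadingCoeff ∣ p ^ k * d) :
    #s ≤ k := by
  have hps : p ^ #s ∣ p ^ k * d := by
    have hprod := prod_dvd_prod_of_dvd (fun _ => p) _ hpg
    rw [prod_const, ← leadingCoeff_prod] at hprod
    exact hprod.trans hdvd
  exact (pow_dvd_pow_iff hp.ne_zero hp.not_isUnit).mp (hp.pow_dvd_of_dvd_mul_right _ hpd hps)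

lemma norm_leadingCoeff_mul_lt_norm_coeff_zero {P : ℂ[X]} {d : ℝ} (hd : 1 ≤ d)
    (hP : 0 < P.natDegree) (hroots : ∀ z ∈ P.roots, d < ‖z‖) :
    ‖P.leadingCoeff‖ * d < ‖P.coeff 0‖ := by
  have hsplit := IsAlgClosed.splits P
  obtain ⟨r, t, ht⟩ : ∃ r t, P.roots = r ::ₘ t := by
    obtain ⟨r, hr⟩ := Multiset.card_pos_iff_exists_mem.mp (hsplit.natDegree_eq_card_roots ▸ hP)
    exact ⟨r, Multiset.exists_cons_of_mem hr⟩
  have hr : d < ‖r‖ := hroots r (by simp [ht])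
  have ht1 : 1 ≤ ‖t.prod‖ := by
    rw [← normHom_apply, map_multiset_prod]
    exact Multiset.one_le_prod_map fun z hz => hd.trans (hroots z (by simp [ht, hz])).le
  have hlc : 0 < ‖P.leadingCoeff‖ :=
    norm_pos_iff.mpr (leadingCoeff_ne_zero.mpr (ne_zero_of_natDegree_gt hP))
  rw [hsplit.coeff_zero_eq_leadingCoeff_mul_prod_roots, ht, Multiset.prod_cons]
  simp only [norm_mul, norm_pow, norm_neg, norm_one, one_pow, one_mul]
  calc ‖P.leadingCoeff‖ * d < ‖P.leadingCoeff‖ * ‖r‖ := by gcongr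
    _ ≤ ‖P.leadingCoeff‖ * (‖r‖ * ‖t.prod‖) := by
      gcongr; exact le_mul_of_one_le_right (norm_nonneg _) ht1

section Int

variable {f g h : ℤ[X]} {d : ℤ} {q : ℕ}

lemma abs_leadingCoeff_mul_lt_abs_coeff_zero_of_dvd (hd : 0 < d)
    (hroots : ∀ z : ℂ, aeval z f = 0 → (d : ℝ) < ‖z‖) (hgf : g ∣ f) (hg : 0 < g.natDegree) :
    |g.leadingCoeff| * d < |g.coeff 0| := by
  have hinj : Function.Injective (Int.castRingHom ℂ) := Int.cast_injective
  have hP := norm_leadingCoeff_mul_lt_norm_coeff_zero (P := g.map (Int.castRingHom ℂ))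
    (d := d) (by exact_mod_cast hd) (by rwa [natDegree_map_eq_of_injective hinj]) ?_
  · rw [leadingCoeff_map_of_injective hinj, coeff_map] at hP
    simp only [eq_intCast, Complex.norm_intCast] at hP
    exact_mod_cast hP
  · intro z hz
    obtain ⟨c, rfl⟩ := hgf
    apply hroots
    rw [mem_roots ((Polynomial.map_ne_zero_iff hinj).mpr (ne_zero_of_natDegree_gt hg)), IsRoot,
      eval_map, ← algebraMap_int_eq, ← aeval_def] at hz
    simp [hz]

lemma abs_leadingCoeff_mul_lt_abs_coeff_zero_div (hd : 0 < d)
    (hroots : ∀ z : ℂ, aeval z f = 0 → (d : ℝ) < ‖z‖) (hfgh : f = g * h)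
    (hg : 0 < g.natDegree) (hh : 0 < h.natDegree) (hq : 0 < q) (hqdvd : (q : ℤ) ∣ f.coeff 0)
    (hqmin : ∀ q' : ℕ, q'.Prime → (q' : ℤ) ∣ f.coeff 0 → q ≤ q') :
    |h.leadingCoeff| * d < |f.coeff 0 / q| := by
  have hf0 : f.coeff 0 = g.coeff 0 * h.coeff 0 := by rw [hfgh, mul_coeff_zero]
  have hg0 := abs_leadingCoeff_mul_lt_abs_coeff_zero_of_dvd hd hroots ⟨h, hfgh⟩ hg
  have hh0 := abs_leadingCoeff_mul_lt_abs_coeff_zero_of_dvd hd hroots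
    ⟨g, hfgh.trans (mul_comm _ _)⟩ hh
  have hlcg : 1 ≤ |g.leadingCoeff| :=
    Int.one_le_abs (leadingCoeff_ne_zero.mpr (ne_zero_of_natDegree_gt hg))
  have hqg : (q : ℤ) ≤ |g.coeff 0| :=
    Int.le_abs_of_dvd_of_forall_prime_dvd_le hqmin (hf0 ▸ dvd_mul_right _ _) (by nlinarith)
  obtain ⟨c, hc⟩ := hqdvd
  rw [hc, Int.mul_ediv_cancel_left c (by exact_mod_cast hq.ne')]
  have habs : (q : ℤ) * |c| = |g.coeff 0| * |h.coeff 0| := by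
    rw [← abs_mul, ← hf0, hc, abs_mul, Nat.abs_cast]
  have hq' : (0 : ℤ) < q := by exact_mod_cast hq
  nlinarith [abs_nonneg (h.coeff 0)]

lemma prime_dvd_leadingCoeff_of_eq_mul {p k : ℕ} (hp : p.Prime) (hd : 0 < d)
    (hroots : ∀ z : ℂ, aeval z f = 0 → (d : ℝ) < ‖z‖) (hfgh : f = g * h)
    (hg : 0 < g.natDegree) (hh : 0 < h.natDegree) (hq : 0 < q) (hqdvd : (q : ℤ) ∣ f.coeff 0)
    (hqmin : ∀ q' : ℕ, q'.Prime → (q' : ℤ) ∣ f.coeff 0 → q ≤ q')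
    (hlc : |f.leadingCoeff| = p ^ k * d) (hsmall : |f.coeff 0 / q| ≤ |f.leadingCoeff|) :
    (p : ℤ) ∣ g.leadingCoeff := by
  by_contra hpg
  have hpk : (p : ℤ) ^ k ∣ h.leadingCoeff := by
    refine (Nat.prime_iff_prime_int.mp hp).pow_dvd_of_dvd_mul_left k hpg ?_
    rw [← leadingCoeff_mul, ← hfgh, ← dvd_abs, hlc]
    exact dvd_mul_right _ _
  have hpk_le : (p : ℤ) ^ k ≤ |h.leadingCoeff| :=
    Int.le_of_dvd (abs_pos.mpr (leadingCoeff_ne_zero.mpr (ne_zero_of_natDegree_gt hh)))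
      ((dvd_abs _ _).mpr hpk)
  have := abs_leadingCoeff_mul_lt_abs_coeff_zero_div hd hroots hfgh hg hh hq hqdvd hqmin
  nlinarith

end Int

end Polynomial

theorem stmt6_general (m : ℕ) (a : ℕ → ℤ) (f : ℤ[X])
    (hf : f = ∑ i ∈ range (m + 1), C (a i) * X ^ i)
    (hm : 1 ≤ m)
    (hprim : f.IsPrimitive)
    (p : ℕ) (hp : p.Prime) (k : ℕ) (hk : 1 ≤ k) (d : ℤ) (hd : 0 < d)
    (hpd : ¬ (p : ℤ) ∣ d)
    (ε : ℤ) (hε : ε = 1 ∨ ε = -1)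
    (ham : a m = ε * (p : ℤ) ^ k * d)
    (hroots : ∀ z : ℂ, aeval z f = 0 → (d : ℝ) < ‖z‖)
    (j : ℕ) (hj1 : 1 ≤ j) (hjm : j ≤ m) (hndvd : ¬ (p : ℤ) ∣ a (m - j))
    (q : ℕ) (hq : q.Prime) (hqdvd : (q : ℤ) ∣ a 0)
    (hqmin : ∀ q' : ℕ, q'.Prime → (q' : ℤ) ∣ a 0 → q ≤ q')
    (hsmall : |a 0 / (q : ℤ)| ≤ |a m|) :
    ∃ n : ℕ, n ≤ min k j ∧ ∃ g : Fin n → ℤ[X],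
      (∀ i, Irreducible (g i)) ∧ f = ∏ i, g i := by
  have habs : |a m| = (p : ℤ) ^ k * d := by
    rcases hε with rfl | rfl <;> simp [ham, abs_mul, abs_of_pos hd]
  have hcoeff : ∀ i ≤ m, f.coeff i = a i := fun i hi => by simp [hf, hi]
  have hf0 : f.coeff 0 = a 0 := hcoeff 0 (Nat.zero_le _)
  have hfdeg : f.natDegree = m := hf ▸ natDegree_sum_range_C_mul_X_pow fun h0 => by
    simp [h0, hd.ne', hp.ne_zero] at habs
  have hlc : f.leadingCoeff = a m := by rw [leadingCoeff, hfdeg, hcoeff m le_rfl]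
  obtain ⟨n, g, hirr, hfg⟩ := exists_fin_irreducible_prod_eq hprim.ne_zero
    fun hu => by have := natDegree_eq_zero_of_isUnit hu; omega
  refine ⟨n, ?_, g, hirr, hfg⟩
  have hdeg : ∀ i, 0 < (g i).natDegree := fun i =>
    natDegree_pos_of_irreducible_of_dvd hprim (hirr i) (hfg ▸ dvd_prod_of_mem g (mem_univ i))
  obtain hn | hn := lt_or_ge n 2
  · omega
  have hpdvd : ∀ i, (p : ℤ) ∣ (g i).leadingCoeff := fun i => by
    obtain ⟨i', hi'⟩ := Fintype.exists_ne_of_one_lt_card (by rw [Fintype.card_fin]; omega) i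
    exact prime_dvd_leadingCoeff_of_eq_mul hp hd hroots
      (hfg.trans (mul_prod_erase _ _ (mem_univ i)).symm) (hdeg i)
      (natDegree_prod_pos (fun i _ => (hirr i).ne_zero) (mem_erase.mpr ⟨hi', mem_univ i'⟩)
        (hdeg i')) hq.pos (hf0 ▸ hqdvd) (hf0 ▸ hqmin) (by rw [hlc, habs]) (by rwa [hf0, hlc])
  have hnk : n ≤ k := by
    simpa using card_le_of_prime_dvd_leadingCoeff
      (Nat.prime_iff_prime_int.mp hp) hpd univ g (fun i _ => hpdvd i)
      (by rw [← hfg, hlc, ← habs, dvd_abs])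
  have hnj : n ≤ j := by
    have := card_add_le_natDegree_prod (Int.castRingHom (ZMod p)) univ g (fun i _ => hdeg i)
      (fun i _ => by simpa [ZMod.intCast_zmod_eq_zero_iff_dvd] using hpdvd i) (e := m - j)
      (by simpa [← hfg, hcoeff _ (Nat.sub_le _ _), ZMod.intCast_zmod_eq_zero_iff_dvd] using hndvd)
    rw [← hfg, hfdeg, card_univ, Fintype.card_fin] at this
    omega
  omega

/-- Theorem 3: factorization into at most `min k j` irreducibles via the
prime factorization of the leading coefficient and root location. -/
theorem stmt6 (m : ℕ) (a : ℕ → ℤ) (f : ℤ[X])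
    (hf : f = ∑ i ∈ range (m + 1), C (a i) * X ^ i)
    (ha0 : a 0 ≠ 0) (hm : 1 ≤ m)
    (hprim : f.IsPrimitive)
    (p : ℕ) (hp : p.Prime) (k : ℕ) (hk : 1 ≤ k) (d : ℤ) (hd : 0 < d)
    (hpd : ¬ (p : ℤ) ∣ d)
    (ε : ℤ) (hε : ε = 1 ∨ ε = -1)
    (ham : a m = ε * (p : ℤ) ^ k * d)
    (hroots : ∀ z : ℂ, aeval z f = 0 → (d : ℝ) < ‖z‖)
    (j : ℕ) (hj1 : 1 ≤ j) (hjm : j ≤ m) (hndvd : ¬ (p : ℤ) ∣ a (m - j))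
    (q : ℕ) (hq : q.Prime) (hqdvd : (q : ℤ) ∣ a 0)
    (hqmin : ∀ q' : ℕ, q'.Prime → (q' : ℤ) ∣ a 0 → q ≤ q')
    (hsmall : |a 0 / (q : ℤ)| ≤ |a m|) :
    ∃ n : ℕ, n ≤ min k j ∧ ∃ g : Fin n → ℤ[X],
      (∀ i, Irreducible (g i)) ∧ f = ∏ i, g i :=
  stmt6_general m a f hf hm hprim p hp k hk d hd hpd ε hε ham hroots j hj1 hjm hndvd q hq hqdvd
    hqmin hsmall
end

section
/- Let f = a_0 + a_1 z + ... + a_m z^m ∈ ℤ[z] be primitive with a_0 a_m ≠ 0 and m ≥ 2, and suppose there is an index j with 0 ≤ j ≤ m−1 such that |a_j| > |a_{j+1}/a_m| + Σ_{0 ≤ i < j} |a_i||a_m|^{j−i} + Σ_{j+1 < i ≤ m} |a_i||a_m|^{−(i−j)}. Then f is a product of at most m−j irreducible polynomials in ℤ[z]. -/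
/-!
Put `R = 1 / |a_m|`. Multiplied by `R^j`, the hypothesis says that on the circle `|z| = R`
the monomial `a_j z^j` dominates the sum of all other terms of `f`, so by the argument
principle (Rouché for a monomial) `f` has exactly `j` complex roots in `|z| < R` and hence
`m - j` roots with `|z| ≥ R`. Every irreducible factor `q` of `f` is non-constant (`f` is
primitive) and has `q(0) ≠ 0`; if all its roots had modulus `< R`, then
`1 ≤ |q(0)| = |lc q| ∏ |ρ| < |lc q| R ≤ |a_m| R = 1`. So every irreducible factor takes at
least one of the `m - j` outer roots, and there are at most `m - j` factors.
-/

open Polynomial Finset Complex Metric Real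

lemma circleIntegral_sub_inv_of_norm_ne {R : ℝ} (hR : 0 < R) {w : ℂ} (hw : ‖w‖ ≠ R) :
    (∮ z in C(0, R), (z - w)⁻¹) = if ‖w‖ < R then 2 * π * I else 0 := by
  split_ifs with h
  · exact circleIntegral.integral_sub_inv_of_mem_ball (by simpa using h)
  · have hne : ∀ z ∈ closedBall (0 : ℂ) R, z - w ≠ 0 := fun z hz hzw => by
      rw [sub_eq_zero.1 hzw, mem_closedBall_zero_iff] at hz
      exact hw (le_antisymm hz (not_lt.1 h))
    refine DiffContOnCl.circleIntegral_eq_zero hR.le (DifferentiableOn.diffContOnCl ?_)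
    rw [closure_ball 0 hR.ne']
    exact (differentiableOn_id.sub_const w).inv hne

lemma circleIntegrable_multiset_sum_sub_inv {R : ℝ} (hR : 0 ≤ R) (s : Multiset ℂ)
    (hs : ∀ w ∈ s, ‖w‖ ≠ R) :
    CircleIntegrable (fun z => (s.map fun w => (z - w)⁻¹).sum) 0 R := by
  refine ContinuousOn.circleIntegrable hR (continuousOn_multiset_sum _ fun w hw => ?_)
  refine ContinuousOn.inv₀ (by fun_prop) fun z hz => sub_ne_zero.2 ?_
  rintro rfl
  exact hs z hw (by simpa using hz)

lemma circleIntegral_multiset_sum_sub_inv {R : ℝ} (hR : 0 < R) (s : Multiset ℂ)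
    (hs : ∀ w ∈ s, ‖w‖ ≠ R) :
    (∮ z in C(0, R), (s.map fun w => (z - w)⁻¹).sum) =
      2 * π * I * (s.filter (‖·‖ < R)).card := by
  induction s using Multiset.induction with
  | empty => simp [circleIntegral]
  | cons w s ih =>
    have hw := hs w (Multiset.mem_cons_self w s)
    have hs' := fun v hv => hs v (Multiset.mem_cons_of_mem hv)
    simp only [Multiset.map_cons, Multiset.sum_cons]
    rw [circleIntegral.integral_add (by simp [hw, abs_of_pos hR])
      (circleIntegrable_multiset_sum_sub_inv hR.le s hs'), ih hs',
      circleIntegral_sub_inv_of_norm_ne hR hw, Multiset.filter_cons]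
    split_ifs <;> simp
    ring

theorem Polynomial.circleIntegral_eval_derivative_div_eval {R : ℝ} (hR : 0 < R) (F : ℂ[X])
    (hF : ∀ z, ‖z‖ = R → F.eval z ≠ 0) :
    (∮ z in C(0, R), F.derivative.eval z / F.eval z) =
      2 * π * I * (F.roots.filter (‖·‖ < R)).card := by
  have hroots : ∀ w ∈ F.roots, ‖w‖ ≠ R := fun w hw h => hF w h (isRoot_of_mem_roots hw)
  rw [← circleIntegral_multiset_sum_sub_inv hR _ hroots]
  refine circleIntegral.integral_congr hR.le fun z hz => ?_
  simpa only [one_div] using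
    (IsAlgClosed.splits F).eval_derivative_div_eval_of_ne_zero (hF z (by simpa using hz))

lemma div_mem_slitPlane_of_norm_sub_lt {u v : ℂ} (h : ‖u - v‖ < ‖v‖) :
    u / v ∈ slitPlane := by
  have hv : v ≠ 0 := norm_pos_iff.1 ((norm_nonneg _).trans_lt h)
  apply ball_one_subset_slitPlane
  rwa [mem_ball, Complex.dist_eq, div_sub_one hv, norm_div, div_lt_one (norm_pos_iff.2 hv)]

theorem Polynomial.hasDerivAt_log_eval_div_monomial {F : ℂ[X]} {b z : ℂ} {j : ℕ}
    (hz : F.eval z / (b * z ^ j) ∈ slitPlane) :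
    HasDerivAt (fun w => log (F.eval w / (b * w ^ j)))
      (F.derivative.eval z / F.eval z - j * z⁻¹) z := by
  obtain ⟨hF, hv⟩ := div_ne_zero_iff.1 (slitPlane_ne_zero hz)
  have hb : b ≠ 0 := left_ne_zero_of_mul hv
  refine ((hasDerivAt_log hz).comp z ((F.hasDerivAt z).div
    ((hasDerivAt_pow j z).const_mul b) hv)).congr_deriv ?_
  rcases j with _ | k
  · field_simp
    simp
  · have hz0 : z ≠ 0 := fun h => hv (by simp [h])
    simp only [Nat.add_sub_cancel, Nat.cast_add, Nat.cast_one]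
    field_simp
    ring

theorem Polynomial.circleIntegral_eval_derivative_div_eval_of_dominant {R : ℝ} (hR : 0 < R)
    (F : ℂ[X]) (b : ℂ) (j : ℕ)
    (hdom : ∀ z, ‖z‖ = R → ‖F.eval z - b * z ^ j‖ < ‖b * z ^ j‖) :
    (∮ z in C(0, R), F.derivative.eval z / F.eval z) = 2 * π * I * j := by
  have hF : ∀ z ∈ sphere (0 : ℂ) R, F.eval z ≠ 0 := fun z hz h => by
    simpa [h] using hdom z (by simpa using hz)
  have hz : ∀ z ∈ sphere (0 : ℂ) R, z ≠ 0 := fun z hz =>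
    ne_zero_of_mem_sphere hR.ne' ⟨z, hz⟩
  have hint : CircleIntegrable (fun z => F.derivative.eval z / F.eval z) 0 R :=
    ContinuousOn.circleIntegrable hR.le (ContinuousOn.div (by fun_prop) (by fun_prop) hF)
  have hint' : CircleIntegrable (fun z => (j : ℂ) * z⁻¹) 0 R :=
    ContinuousOn.circleIntegrable hR.le (continuousOn_const.mul (continuousOn_id.inv₀ hz))
  have hzero : (∮ z in C(0, R), (F.derivative.eval z / F.eval z - j * z⁻¹)) = 0 :=
    circleIntegral.integral_eq_zero_of_hasDerivWithinAt hR.le fun z hz =>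
      (hasDerivAt_log_eval_div_monomial (div_mem_slitPlane_of_norm_sub_lt
        (hdom z (by simpa using hz)))).hasDerivWithinAt
  rw [circleIntegral.integral_sub hint hint', sub_eq_zero] at hzero
  have hinv : (∮ z in C(0, R), z⁻¹) = 2 * π * I := by
    simpa using circleIntegral.integral_sub_center_inv (0 : ℂ) hR.ne'
  rw [hzero, circleIntegral.integral_const_mul, hinv]
  ring

theorem Polynomial.card_roots_filter_norm_lt_of_dominant {R : ℝ} (hR : 0 < R)
    (F : ℂ[X]) (b : ℂ) (j : ℕ)
    (hdom : ∀ z, ‖z‖ = R → ‖F.eval z - b * z ^ j‖ < ‖b * z ^ j‖) :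
    (F.roots.filter (‖·‖ < R)).card = j := by
  have hF : ∀ z, ‖z‖ = R → F.eval z ≠ 0 := fun z hz h => by simpa [h] using hdom z hz
  have h := (F.circleIntegral_eval_derivative_div_eval hR hF).symm.trans
    (F.circleIntegral_eval_derivative_div_eval_of_dominant hR b j hdom)
  exact_mod_cast mul_left_cancel₀ two_pi_I_ne_zero h

lemma sum_erase_mul_inv_pow {A : ℝ} (hA : A ≠ 0) (c : ℕ → ℝ) {j m : ℕ} (hjm : j < m) :
    ∑ i ∈ (range (m + 1)).erase j, c i * A⁻¹ ^ i =
      (c (j + 1) / A + ∑ i ∈ range j, c i * A ^ (j - i) +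
        ∑ i ∈ Icc (j + 2) m, c i / A ^ (i - j)) * A⁻¹ ^ j := by
  have hsplit : (range (m + 1)).erase j = range j ∪ insert (j + 1) (Icc (j + 2) m) := by
    ext i
    simp only [mem_erase, mem_range, mem_union, mem_insert, mem_Icc]
    omega
  have hdisj : Disjoint (range j) (insert (j + 1) (Icc (j + 2) m)) := by
    simp only [disjoint_left, mem_range, mem_insert, mem_Icc]
    omega
  have hlow : ∀ i ∈ range j, c i * A⁻¹ ^ i = c i * A ^ (j - i) * A⁻¹ ^ j := by
    intro i hi
    obtain ⟨k, rfl⟩ := Nat.exists_eq_add_of_le (mem_range.1 hi).le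
    rw [Nat.add_sub_cancel_left, pow_add, inv_pow, inv_pow]
    field_simp
  have hhigh : ∀ i ∈ Icc (j + 2) m, c i * A⁻¹ ^ i = c i / A ^ (i - j) * A⁻¹ ^ j := by
    intro i hi
    obtain ⟨k, rfl⟩ := Nat.exists_eq_add_of_le (show j ≤ i by grind)
    rw [Nat.add_sub_cancel_left, pow_add, inv_pow, inv_pow]
    field_simp
  rw [hsplit, sum_union hdisj, sum_insert (by simp), sum_congr rfl hlow, sum_congr rfl hhigh,
    ← sum_mul, ← sum_mul, pow_succ]
  field_simp
  ring

lemma norm_sum_sub_lt_of_dominant {c : ℕ → ℂ} {A : ℝ} (hA : 0 < A) {j m : ℕ} (hjm : j < m)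
    (hdom : ‖c (j + 1)‖ / A + ∑ i ∈ range j, ‖c i‖ * A ^ (j - i) +
      ∑ i ∈ Icc (j + 2) m, ‖c i‖ / A ^ (i - j) < ‖c j‖)
    {z : ℂ} (hz : ‖z‖ = A⁻¹) :
    ‖∑ i ∈ range (m + 1), c i * z ^ i - c j * z ^ j‖ < ‖c j * z ^ j‖ := by
  rw [← add_sum_erase _ _ (mem_range.2 (show j < m + 1 by omega)), add_sub_cancel_left]
  calc _ ≤ ∑ i ∈ (range (m + 1)).erase j, ‖c i‖ * A⁻¹ ^ i :=
        (norm_sum_le _ _).trans_eq (sum_congr rfl fun i _ => by rw [norm_mul, norm_pow, hz])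
    _ = _ := sum_erase_mul_inv_pow hA.ne' _ hjm
    _ < ‖c j‖ * A⁻¹ ^ j := mul_lt_mul_of_pos_right hdom (by positivity)
    _ = ‖c j * z ^ j‖ := by rw [norm_mul, norm_pow, hz]

theorem Polynomial.norm_coeff_zero_lt_of_forall_norm_roots_lt {P : ℂ[X]} {R : ℝ}
    (hP : 0 < P.natDegree) (h0 : P.coeff 0 ≠ 0) (h : ∀ r ∈ P.roots, ‖r‖ < R) :
    ‖P.coeff 0‖ < ‖P.leadingCoeff‖ * R ^ P.natDegree := by
  have hs := IsAlgClosed.splits P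
  have hne : P.roots ≠ 0 := by
    rw [← Multiset.card_pos, ← hs.natDegree_eq_card_roots]
    exact hP
  have hpos : ∀ r ∈ P.roots, 0 < ‖r‖ := fun r hr => norm_pos_iff.2 fun hr0 =>
    h0 (by rw [coeff_zero_eq_eval_zero]; simpa [hr0] using isRoot_of_mem_roots hr)
  have hprod : (P.roots.map (‖·‖)).prod < R ^ P.natDegree :=
    calc _ < (P.roots.map fun _ => R).prod := Multiset.prod_map_lt_prod_map hne _ _ hpos h
      _ = R ^ P.natDegree := by simp [hs.natDegree_eq_card_roots]
  rw [hs.coeff_zero_eq_leadingCoeff_mul_prod_roots, norm_mul, norm_mul, norm_pow, norm_neg,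
    norm_one, one_pow, one_mul,
    show ‖P.roots.prod‖ = (P.roots.map (‖·‖)).prod from
      map_multiset_prod (normHom : ℂ →*₀ ℝ) _]
  exact mul_lt_mul_of_pos_left hprod
    (norm_pos_iff.2 (leadingCoeff_ne_zero.2 (ne_zero_of_natDegree_gt hP)))

theorem Polynomial.exists_mem_roots_map_inv_abs_leadingCoeff_le_norm {f q : ℤ[X]}
    (hf : f.IsPrimitive) (hf0 : f.coeff 0 ≠ 0) (hq : q ∣ f) (hqu : ¬IsUnit q) :
    ∃ r ∈ (q.map (Int.castRingHom ℂ)).roots, |(f.leadingCoeff : ℝ)|⁻¹ ≤ ‖r‖ := by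
  obtain ⟨g, rfl⟩ := hq
  have hq0 : q.coeff 0 ≠ 0 := fun h => hf0 (by simp [mul_coeff_zero, h])
  have hdeg : 0 < q.natDegree := Nat.pos_of_ne_zero fun h => hqu <| by
    rw [eq_C_of_natDegree_eq_zero h] at hf ⊢
    exact (hf _ (dvd_mul_right _ _)).map C
  have hg : 1 ≤ |(g.leadingCoeff : ℝ)| := by
    exact_mod_cast Int.one_le_abs (leadingCoeff_ne_zero.2 (right_ne_zero_of_mul hf.ne_zero))
  have hq1 : 1 ≤ |(q.leadingCoeff : ℝ)| := by
    exact_mod_cast Int.one_le_abs (leadingCoeff_ne_zero.2 (left_ne_zero_of_mul hf.ne_zero))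
  by_contra! h
  have hφ : Function.Injective (Int.castRingHom ℂ) := RingHom.injective_int _
  have hlt := (q.map (Int.castRingHom ℂ)).norm_coeff_zero_lt_of_forall_norm_roots_lt
    (by rwa [natDegree_map_eq_of_injective hφ]) (by simpa using hq0) h
  rw [natDegree_map_eq_of_injective hφ, leadingCoeff_map_of_injective hφ, coeff_map] at hlt
  simp only [eq_intCast, Complex.norm_intCast, leadingCoeff_mul, Int.cast_mul, abs_mul] at hlt
  set R := (|(q.leadingCoeff : ℝ)| * |(g.leadingCoeff : ℝ)|)⁻¹
  have hR : R ≤ 1 := inv_le_one_of_one_le₀ (by nlinarith)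
  have hRpow : R ^ q.natDegree ≤ R := pow_le_of_le_one (by positivity) hR hdeg.ne'
  have hq0_lt : |(q.coeff 0 : ℝ)| < 1 :=
    calc _ < |(q.leadingCoeff : ℝ)| * R ^ q.natDegree := hlt
      _ ≤ |(q.leadingCoeff : ℝ)| * |(g.leadingCoeff : ℝ)| * R := by gcongr; nlinarith
      _ = 1 := mul_inv_cancel₀ (by positivity)
  exact hq0 (Int.abs_lt_one_iff.1 (by exact_mod_cast hq0_lt))

theorem Multiset.card_le_card_filter_roots_prod {K : Type*} [CommRing K] [IsDomain K]
    {s : Multiset K[X]} (hs : 0 ∉ s) (p : K → Prop) [DecidablePred p]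
    (h : ∀ q ∈ s, ∃ r ∈ q.roots, p r) : s.card ≤ (s.prod.roots.filter p).card := by
  rw [roots_multiset_prod _ hs, Multiset.filter_bind, Multiset.card_bind]
  calc s.card = (s.map fun _ => 1).sum := by simp
    _ ≤ _ := Multiset.sum_map_le_sum_map _ _ fun q hq => by
      obtain ⟨r, hr, hpr⟩ := h q hq
      exact Multiset.card_pos_iff_exists_mem.2 ⟨r, Multiset.mem_filter.2 ⟨hr, hpr⟩⟩

theorem Polynomial.IsPrimitive.exists_irreducible_factors_card_le {f : ℤ[X]}
    (hf : f.IsPrimitive) (hf0 : f.coeff 0 ≠ 0) (hdeg : 0 < f.natDegree) :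
    ∃ n ≤ ((f.map (Int.castRingHom ℂ)).roots.filter
        fun r => |(f.leadingCoeff : ℝ)|⁻¹ ≤ ‖r‖).card,
      ∃ g : Fin n → ℤ[X], (∀ i, Irreducible (g i)) ∧ f = ∏ i, g i := by
  have hnu : ¬IsUnit f := fun h => hdeg.ne' (natDegree_eq_zero_of_isUnit h)
  obtain ⟨s, hirr, hprod, -⟩ :=
    (WfDvdMonoid.not_isUnit_iff_exists_factors_eq f hf.ne_zero).1 hnu
  refine ⟨s.toList.length, ?_, s.toList.get,
    fun i => hirr _ (Multiset.mem_toList.1 (List.get_mem _ _)),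
    by rw [← List.prod_ofFn, List.ofFn_get, Multiset.prod_toList, hprod]⟩
  have hφ : Function.Injective (Int.castRingHom ℂ) := RingHom.injective_int _
  have hmap : f.map (Int.castRingHom ℂ) = (s.map (map (Int.castRingHom ℂ))).prod := by
    rw [← hprod, ← coe_mapRingHom, map_multiset_prod]
  rw [Multiset.length_toList, hmap, ← Multiset.card_map (map (Int.castRingHom ℂ))]
  refine Multiset.card_le_card_filter_roots_prod (fun h0 => ?_) _ fun _ hQ => ?_
  · obtain ⟨q, hq, hq0⟩ := Multiset.mem_map.1 h0
    exact (hirr q hq).ne_zero ((Polynomial.map_eq_zero_iff hφ).1 hq0)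
  · obtain ⟨q, hq, rfl⟩ := Multiset.mem_map.1 hQ
    exact exists_mem_roots_map_inv_abs_leadingCoeff_le_norm hf hf0
      (hprod ▸ Multiset.dvd_prod hq) (hirr q hq).not_isUnit

lemma coeff_sum_range_C_mul_X_pow {R : Type*} [Semiring R] (a : ℕ → R) {m k : ℕ}
    (hk : k ≤ m) :
    (∑ i ∈ range (m + 1), C (a i) * X ^ i).coeff k = a k := by
  simp [Nat.lt_succ_iff.2 hk]

lemma natDegree_sum_range_C_mul_X_pow {R : Type*} [Semiring R] (a : ℕ → R) {m : ℕ}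
    (ham : a m ≠ 0) : (∑ i ∈ range (m + 1), C (a i) * X ^ i).natDegree = m :=
  natDegree_eq_of_le_of_coeff_ne_zero
    (natDegree_sum_le_of_forall_le _ _ fun i hi =>
      (natDegree_C_mul_X_pow_le _ _).trans (Nat.lt_succ_iff.1 (mem_range.1 hi)))
    (by rwa [coeff_sum_range_C_mul_X_pow a le_rfl])

/-- Corollary 1: Theorem 4 with `b = |a m|` and `δ = 1 / |a m|`. -/
theorem stmt11 (m : ℕ) (hm : 2 ≤ m) (a : ℕ → ℤ) (f : ℤ[X])
    (hf : f = ∑ i ∈ range (m + 1), C (a i) * X ^ i)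
    (ha : a 0 * a m ≠ 0) (hprim : f.IsPrimitive)
    (j : ℕ) (hj : j ≤ m - 1)
    (hineq : (|a j| : ℝ) >
      (|a (j + 1)| : ℝ) / (|a m| : ℝ) +
      (∑ i ∈ range j, (|a i| : ℝ) * (|a m| : ℝ) ^ (j - i)) +
      ∑ i ∈ Icc (j + 2) m, (|a i| : ℝ) / (|a m| : ℝ) ^ (i - j)) :
    ∃ n : ℕ, n ≤ m - j ∧ ∃ g : Fin n → ℤ[X],
      (∀ i, Irreducible (g i)) ∧ f = ∏ i, g i := by
  obtain ⟨ha0, ham⟩ := mul_ne_zero_iff.1 ha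
  have hdeg : f.natDegree = m := hf ▸ natDegree_sum_range_C_mul_X_pow a ham
  have hlead : f.leadingCoeff = a m := by
    rw [leadingCoeff, hdeg, hf, coeff_sum_range_C_mul_X_pow a le_rfl]
  set F := f.map (Int.castRingHom ℂ) with hF
  have hA : 0 < |(a m : ℝ)| := by positivity
  have hinside : (F.roots.filter (‖·‖ < |(a m : ℝ)|⁻¹)).card = j :=
    F.card_roots_filter_norm_lt_of_dominant (inv_pos.2 hA) (a j) j fun z hz => by
      simpa [F, hf, Polynomial.map_sum, eval_finsetSum] using
        norm_sum_sub_lt_of_dominant (c := fun i => (a i : ℂ)) hA (show j < m by omega)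
          (by simpa only [Complex.norm_intCast] using hineq) hz
  have hcard : F.roots.card = m := by
    rw [← (IsAlgClosed.splits F).natDegree_eq_card_roots,
      natDegree_map_eq_of_injective (RingHom.injective_int _), hdeg]
  obtain ⟨n, hn, hfac⟩ := hprim.exists_irreducible_factors_card_le
    (by rwa [hf, coeff_sum_range_C_mul_X_pow a (Nat.zero_le m)]) (by omega)
  rw [← hF, hlead] at hn
  refine ⟨n, hn.trans ?_, hfac⟩
  have hsplit :=
    congrArg Multiset.card (Multiset.filter_add_not (‖·‖ < |(a m : ℝ)|⁻¹) F.roots)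
  simp only [Multiset.card_add, hinside, hcard, not_lt] at hsplit
  omega
end
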